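/- Let α > 1 be irrational with convergent numerators p_n, and S_α the set avoided by the partition {A_α, B_α}. Then every numerator p_n of a convergent of α belongs to S_α. -/

import Mathlib

/-- `E α n` is the error `n - qα` where `qα` is the integer multiple of `α`
nearest to `n` (for `α > 1`, this multiple is `round (n/α) * α`). -/
noncomputable def E (α : ℝ) (n : ℕ) : ℝ := (n : ℝ) - round ((n : ℝ) / α) * α

/-- `A_α`: positive integers whose nearest multiple of `α` exceeds them. -/
def Aset (α : ℝ) : Set ℕ := {n | 0 < n ∧ E α n < 0}

/-- `B_α`: positive integers whose nearest multiple of `α` is below them. -/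
def Bset (α : ℝ) : Set ℕ := {n | 0 < n ∧ 0 < E α n}

/-- `S_α`: positive integers not expressible as a sum of two distinct elements
of `A_α` nor of two distinct elements of `B_α`. -/
def Sset (α : ℝ) : Set ℕ :=
  {s | 0 < s ∧ (∀ x ∈ Aset α, ∀ y ∈ Aset α, x ≠ y → x + y ≠ s) ∧
       (∀ x ∈ Bset α, ∀ y ∈ Bset α, x ≠ y → x + y ≠ s)}
/-- Data of the continued fraction expansion `α = [a 0; a 1, a 2, ...]` of an
irrational `α > 1`, with `t n` the successive complete quotients, and
`p n / q n` the convergents. -/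
structure CF (α : ℝ) where
  a : ℕ → ℕ
  t : ℕ → ℝ
  p : ℕ → ℕ
  q : ℕ → ℕ
  t0 : t 0 = α
  ha : ∀ n, 1 ≤ a n
  floor_t : ∀ n, (a n : ℝ) = ⌊t n⌋
  t_rec : ∀ n, t n = a n + 1 / t (n + 1)
  p0 : p 0 = a 0
  p1 : p 1 = a 1 * a 0 + 1
  p_rec : ∀ n, p (n + 2) = a (n + 2) * p (n + 1) + p n
  q0 : q 0 = 1
  q1 : q 1 = a 1
  q_rec : ∀ n, q (n + 2) = a (n + 2) * q (n + 1) + q n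

/-- The numerators extended by two initial terms: `P 0 = p_{-2} = 0`,
`P 1 = p_{-1} = 1`, and `P (n+2) = p n`. -/
def CF.P {α : ℝ} (c : CF α) : ℕ → ℕ
  | 0 => 0
  | 1 => 1
  | n + 2 => c.p n

/-!
Put `θ = 1 / α`. Then `n ∈ A_α` or `n ∈ B_α` according as the error `nθ - round (nθ)` is
negative or positive. The numerators `p_n` are the denominators of the convergents `q_n / p_n`
of `θ`, so by the best-approximation property `|p_n θ - q_n| ≤ |mθ - j|` for all integers
`0 < |m| < p_{n+1}` and `j`. If `p_n = x + y` with `x ≠ y`, the errors `a`, `b`, `c` of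
`xθ`, `yθ`, `p_n θ` therefore satisfy `a + b - c ∈ ℤ`, `|c| ≤ |a|` (take `m = x`) and
`|c| ≤ |a - b|` (take `m = x - y`), and since all three lie in `[-1/2, 1/2]` (strictly for `a`
and `b`, as `θ` is irrational) this rules out `a` and `b` having the same sign.
-/

theorem mul_nonpos_of_add_sub_eq_int {a b c : ℝ} {k : ℤ} (hk : a + b - c = k)
    (ha : |a| < 1 / 2) (hb : |b| < 1 / 2) (hc : |c| ≤ 1 / 2)
    (hca : |c| ≤ |a|) (hcab : |c| ≤ |a - b|) : a * b ≤ 0 := by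
  rw [abs_lt] at ha hb
  rw [abs_le] at hc
  have hk : k = -1 ∨ k = 0 ∨ k = 1 := by
    have : (-2 : ℝ) < k ∧ (k : ℝ) < 2 := by constructor <;> linarith
    norm_cast at this
    omega
  -- In each case with `a`, `b` of the same sign, `c` is forced beyond `|a|`, `|a - b|` or `1/2`.
  by_contra! hab
  rcases hk with rfl | rfl | rfl <;> push_cast at hk <;>
    rcases mul_pos_iff.mp hab with ⟨ha0, hb0⟩ | ⟨ha0, hb0⟩ <;>
    cases abs_cases c <;> cases abs_cases a <;> cases abs_cases (a - b) <;> linarith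

theorem abs_le_abs_add_of_mul_nonneg {a b : ℝ} (h : 0 ≤ a * b) : |a| ≤ |a + b| := by
  rw [(abs_add_eq_add_abs_iff a b).mpr (mul_nonneg_iff.mp h)]
  exact le_add_of_nonneg_right (abs_nonneg b)

theorem ne_zero_and_mul_nonpos_of_abs_lt {a b u v : ℤ} (ha : 0 ≤ a)
    (h0 : u * a + v * b ≠ 0) (hb : |u * a + v * b| < b) : u ≠ 0 ∧ u * v ≤ 0 := by
  have hb0 : 0 < b := (abs_nonneg _).trans_lt hb
  constructor
  · rintro rfl
    rw [zero_mul, zero_add] at h0 hb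
    have hv : 1 ≤ |v| := Int.one_le_abs (left_ne_zero_of_mul h0)
    rw [abs_mul, abs_of_pos hb0] at hb
    nlinarith
  · by_contra! huv
    rcases mul_pos_iff.mp huv with ⟨hu, hv⟩ | ⟨hu, hv⟩ <;>
      cases abs_cases (u * a + v * b) <;> nlinarith

theorem Irrational.abs_sub_round_lt_half {x : ℝ} (h : Irrational x) : |x - round x| < 1 / 2 := by
  refine (abs_sub_round x).lt_of_ne fun heq => ?_
  rcases abs_eq (by norm_num : (0 : ℝ) ≤ 1 / 2) |>.mp heq with h' | h'
  · exact h.ne_rat (round x + 1 / 2) (by push_cast; linarith)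
  · exact h.ne_rat (round x - 1 / 2) (by push_cast; linarith)

theorem E_eq_mul_sub_round {α : ℝ} (hα : α ≠ 0) (m : ℕ) :
    E α m = α * (m / α - round (m / α)) := by
  rw [E]
  field_simp

namespace CF

variable {α : ℝ} (c : CF α)

/-- `Q k = q_{k-2}`, extended like `CF.P` by `q_{-2} = 1` and `q_{-1} = 0`. -/
def Q : ℕ → ℕ
  | 0 => 1
  | 1 => 0
  | n + 2 => c.q n

theorem P_add_two (k : ℕ) : c.P (k + 2) = c.a k * c.P (k + 1) + c.P k := by
  match k with
  | 0 => simp [P, c.p0]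
  | 1 => simp [P, c.p1, c.p0]
  | k + 2 => exact c.p_rec k

theorem Q_add_two (k : ℕ) : c.Q (k + 2) = c.a k * c.Q (k + 1) + c.Q k := by
  match k with
  | 0 => simp [Q, c.q0]
  | 1 => simp [Q, c.q1, c.q0]
  | k + 2 => exact c.q_rec k

theorem one_le_P_succ (k : ℕ) : 1 ≤ c.P (k + 1) := by
  induction k with
  | zero => simp [P]
  | succ k ih => rw [P_add_two]; nlinarith [c.ha k]

theorem p_lt_p_succ (n : ℕ) : c.p n < c.p (n + 1) := by
  have h := c.P_add_two (n + 1)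
  have := c.one_le_P_succ n
  have := c.one_le_P_succ (n + 1)
  have := c.ha (n + 1)
  change c.P (n + 2) < c.P (n + 3)
  nlinarith

theorem one_le_t (k : ℕ) : 1 ≤ c.t k := by
  calc (1 : ℝ) ≤ c.a k := by exact_mod_cast c.ha k
    _ = ⌊c.t k⌋ := c.floor_t k
    _ ≤ c.t k := Int.floor_le _

theorem alpha_pos (c : CF α) : 0 < α := c.t0 ▸ one_pos.trans_le (c.one_le_t 0)

theorem det_P_Q (k : ℕ) : (c.P (k + 1) : ℤ) * c.Q k - c.P k * c.Q (k + 1) = (-1) ^ k := by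
  induction k with
  | zero => simp [P, Q]
  | succ k ih =>
    rw [c.P_add_two, c.Q_add_two, pow_succ]
    push_cast
    linear_combination -ih

theorem alpha_mul_eq (k : ℕ) :
    α * (c.t k * c.Q (k + 1) + c.Q k) = c.t k * c.P (k + 1) + c.P k := by
  induction k with
  | zero => simp [P, Q, c.t0]
  | succ k ih =>
    have ht : c.t k * c.t (k + 1) = c.a k * c.t (k + 1) + 1 := by
      rw [c.t_rec k]
      field_simp [(one_pos.trans_le (c.one_le_t (k + 1))).ne']
    rw [c.P_add_two, c.Q_add_two]
    push_cast
    linear_combination c.t (k + 1) * ih - (α * c.Q (k + 1) - c.P (k + 1)) * ht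

/-- `P k` times the error of `Q k / P k = q_{k-2} / p_{k-2}` as an approximation of `1 / α`. -/
noncomputable def err (k : ℕ) : ℝ := c.P k / α - c.Q k

theorem t_mul_err_succ (k : ℕ) : c.t k * c.err (k + 1) = -c.err k := by
  have := c.alpha_pos.ne'
  simp only [err]
  field_simp
  linear_combination -c.alpha_mul_eq k

theorem err_ne_zero (k : ℕ) : c.err k ≠ 0 := by
  induction k with
  | zero => simp [err, P, Q]
  | succ k ih =>
    intro h
    have := c.t_mul_err_succ k
    rw [h, mul_zero, zero_eq_neg] at this
    exact ih this

theorem err_mul_err_succ_neg (k : ℕ) : c.err k * c.err (k + 1) < 0 := by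
  have ht : 0 < c.t k := one_pos.trans_le (c.one_le_t k)
  have h : c.err k * c.err (k + 1) * c.t k = -c.err k ^ 2 := by
    linear_combination c.err k * c.t_mul_err_succ k
  have := pow_pos (abs_pos.mpr (c.err_ne_zero k)) 2
  rw [sq_abs] at this
  nlinarith

theorem exists_eq_P_Q_combination (K : ℕ) (m j : ℤ) :
    ∃ u v : ℤ, m = u * c.P K + v * c.P (K + 1) ∧ j = u * c.Q K + v * c.Q (K + 1) := by
  have hd := c.det_P_Q K
  have hs : ((-1 : ℤ) ^ K) ^ 2 = 1 := by rw [← pow_mul, mul_comm, pow_mul]; norm_num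
  refine ⟨(-1) ^ K * (j * c.P (K + 1) - m * c.Q (K + 1)),
    (-1) ^ K * (m * c.Q K - j * c.P K), ?_, ?_⟩
  · linear_combination (-(-1) ^ K * m) * hd - m * hs
  · linear_combination (-(-1) ^ K * j) * hd - j * hs

/-- Best approximation: `q_n / p_n` approximates `1 / α` better than any fraction with
denominator less than `p_{n+1}`. -/
theorem abs_err_le (K : ℕ) {m : ℤ} (j : ℤ) (hm0 : m ≠ 0) (hm : |m| < c.P (K + 1)) :
    |c.err K| ≤ |m / α - j| := by
  obtain ⟨u, v, rfl, rfl⟩ := c.exists_eq_P_Q_combination K m j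
  obtain ⟨hu, huv⟩ := ne_zero_and_mul_nonpos_of_abs_lt (Int.natCast_nonneg _) hm0 hm
  have hlin : ((u * c.P K + v * c.P (K + 1) : ℤ) : ℝ) / α
      - ((u * c.Q K + v * c.Q (K + 1) : ℤ) : ℝ) = u * c.err K + v * c.err (K + 1) := by
    simp only [err]; push_cast; ring
  have hsame : 0 ≤ (u * c.err K) * (v * c.err (K + 1)) := by
    have huv' : (u : ℝ) * v ≤ 0 := by exact_mod_cast huv
    nlinarith [c.err_mul_err_succ_neg K]
  have hu1 : (1 : ℝ) ≤ |(u : ℝ)| := by exact_mod_cast Int.one_le_abs hu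
  rw [hlin]
  calc |c.err K| ≤ |(u : ℝ)| * |c.err K| := le_mul_of_one_le_left (abs_nonneg _) hu1
    _ = |u * c.err K| := (abs_mul _ _).symm
    _ ≤ _ := abs_le_abs_add_of_mul_nonneg hsame

theorem abs_sub_round_p_le (n : ℕ) {m : ℤ} (j : ℤ) (hm0 : m ≠ 0) (hm : |m| < c.p (n + 1)) :
    |c.p n / α - round (c.p n / α)| ≤ |m / α - j| :=
  calc |(c.p n : ℝ) / α - round (c.p n / α)|
    _ ≤ |c.p n / α - ((c.q n : ℤ) : ℝ)| := round_le _ _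
    _ = |c.err (n + 2)| := by simp [err, P, Q]
    _ ≤ _ := c.abs_err_le (n + 2) j hm0 hm

theorem sub_round_mul_sub_round_nonpos (hirr : Irrational α) (n : ℕ) {x y : ℕ}
    (hx : 0 < x) (hy : 0 < y) (hxy : x ≠ y) (hsum : x + y = c.p n) :
    (x / α - round (x / α)) * (y / α - round (y / α)) ≤ 0 := by
  have hp := c.p_lt_p_succ n
  refine mul_nonpos_of_add_sub_eq_int (c := c.p n / α - round (c.p n / α))
    (k := round (c.p n / α) - round (x / α) - round (y / α)) ?_
    (hirr.natCast_div hx.ne').abs_sub_round_lt_half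
    (hirr.natCast_div hy.ne').abs_sub_round_lt_half
    (abs_sub_round _) ?_ ?_
  · rw [← hsum]; push_cast; ring
  · exact_mod_cast c.abs_sub_round_p_le n (m := x) (round (x / α)) (by omega)
      (abs_lt.mpr ⟨by omega, by omega⟩)
  · have := c.abs_sub_round_p_le n (m := x - y) (round (x / α) - round (y / α)) (by omega)
      (abs_lt.mpr ⟨by omega, by omega⟩)
    push_cast at this
    convert this using 2
    ring

theorem E_mul_E_nonpos (hirr : Irrational α) (n : ℕ) {x y : ℕ}
    (hx : 0 < x) (hy : 0 < y) (hxy : x ≠ y) (hsum : x + y = c.p n) : E α x * E α y ≤ 0 := by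
  have hα := c.alpha_pos
  rw [E_eq_mul_sub_round hα.ne', E_eq_mul_sub_round hα.ne', mul_mul_mul_comm]
  exact mul_nonpos_of_nonneg_of_nonpos (mul_self_nonneg α)
    (c.sub_round_mul_sub_round_nonpos hirr n hx hy hxy hsum)

end CF

theorem stmt8_general (α : ℝ) (hirr : Irrational α) (c : CF α) (n : ℕ) :
    c.p n ∈ Sset α := by
  refine ⟨c.one_le_P_succ (n + 1), ?_, ?_⟩
  · rintro x ⟨hx, hxA⟩ y ⟨hy, hyA⟩ hxy hsum
    exact (mul_pos_of_neg_of_neg hxA hyA).not_ge (c.E_mul_E_nonpos hirr n hx hy hxy hsum)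
  · rintro x ⟨hx, hxB⟩ y ⟨hy, hyB⟩ hxy hsum
    exact (mul_pos hxB hyB).not_ge (c.E_mul_E_nonpos hirr n hx hy hxy hsum)

/-- The numerator of every convergent of `α` lies in `S_α`. -/
theorem stmt8 (α : ℝ) (hα : 1 < α) (hirr : Irrational α) (c : CF α) (n : ℕ) :
    c.p n ∈ Sset α :=
  stmt8_general α hirr c n
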